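/- If W : (0,∞) → ℝ is defined by W(r) = 1/r² − K₁(r)/r, where K₁ is the modified Bessel function of the second kind of order 1, then the radial function x ↦ W(|x|) on ℝ⁴ ∖ {0} satisfies −ΔW + W = 1/|x|² pointwise. -/

import Mathlib

noncomputable section

abbrev E4 := EuclideanSpace ℝ (Fin 4)

def lap (f : E4 → ℝ) (x : E4) : ℝ :=
  ∑ i : Fin 4, iteratedDeriv 2 (fun t : ℝ => f (x + t • EuclideanSpace.single i (1:ℝ))) 0

/-- The modified Bessel function of the second kind of order 1,
via its integral representation. -/
def besselK1 (r : ℝ) : ℝ :=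
  ∫ t in Set.Ioi (0:ℝ), Real.exp (-r * Real.cosh t) * Real.cosh t

def Wfun (r : ℝ) : ℝ := 1 / r^2 - besselK1 r / r

/-!
Write `Mₙ(r) = ∫₀^∞ e^{-r cosh t} coshⁿ t dt`, so that `K₁ = M₁` and, differentiating under the
integral, `Mₙ' = -Mₙ₊₁`. Bessel's equation `r²K₁'' + rK₁' - (r² + 1)K₁ = 0` then reads
`r²M₃ - rM₂ - (r² + 1)M₁ = 0`, which is `∫₀^∞ G' = 0` for
`G(t) = e^{-r cosh t} sinh t (r cosh t + 1)`, a function vanishing at `0` and at `∞`.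

For a radial function `f(|x|)` on an inner product space, the second derivative along a unit
vector `v` is `f''(r) c² + f'(r) (1 - c²) / r` with `c = ⟪x, v⟫ / r`; summing over an orthonormal
basis of `ℝ⁴` gives `Δ f(|x|) = f'' + 3 f' / r`. With `W = 1/r² - M₁/r` this is
`W'' + 3W'/r = -M₁/r = W - 1/r²` once `M₃` is eliminated by Bessel's equation.
-/

open Real MeasureTheory Set Filter Topology RealInnerProductSpace
open scoped Nat

section Radial

variable {E : Type*} [NormedAddCommGroup E] [InnerProductSpace ℝ E]

theorem HasDerivAt.norm {γ : ℝ → E} {γ' : E} {t : ℝ} (hγ : HasDerivAt γ γ' t) (h0 : γ t ≠ 0) :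
    HasDerivAt (fun s => ‖γ s‖) (⟪γ t, γ'⟫ / ‖γ t‖) t := by
  have hsqrt : HasDerivAt (fun s => √(‖γ s‖ ^ 2)) (2 * ⟪γ t, γ'⟫ / (2 * √(‖γ t‖ ^ 2))) t :=
    hγ.norm_sq.sqrt (by positivity)
  simp only [sqrt_sq (norm_nonneg _)] at hsqrt
  convert hsqrt using 1
  field_simp

theorem hasDerivAt_add_smul (x v : E) (t : ℝ) : HasDerivAt (fun s : ℝ => x + s • v) v t := by
  simpa using ((hasDerivAt_id t).smul_const v).const_add x

theorem hasDerivAt_norm_add_smul {x v : E} {t : ℝ} (h0 : x + t • v ≠ 0) :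
    HasDerivAt (fun s : ℝ => ‖x + s • v‖) (⟪x + t • v, v⟫ / ‖x + t • v‖) t :=
  (hasDerivAt_add_smul x v t).norm h0

theorem iteratedDeriv_two_comp_norm_add_smul {f f' : ℝ → ℝ} {f'' : ℝ} {x : E} (v : E)
    (hx : x ≠ 0) (hf : ∀ᶠ s in 𝓝 ‖x‖, HasDerivAt f (f' s) s) (hf' : HasDerivAt f' f'' ‖x‖) :
    iteratedDeriv 2 (fun t : ℝ => f ‖x + t • v‖) 0 =
      f'' * (⟪x, v⟫ / ‖x‖) ^ 2 + f' ‖x‖ * (‖v‖ ^ 2 - (⟪x, v⟫ / ‖x‖) ^ 2) / ‖x‖ := by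
  have hnear : ∀ᶠ t in 𝓝 (0 : ℝ),
      x + t • v ≠ 0 ∧ HasDerivAt f (f' ‖x + t • v‖) ‖x + t • v‖ := by
    have hline : Tendsto (fun t : ℝ => x + t • v) (𝓝 0) (𝓝 x) := by
      have hcont : Continuous fun t : ℝ => x + t • v := by fun_prop
      simpa using hcont.tendsto 0
    exact (hline.eventually_ne hx).and (hline.norm.eventually hf)
  have hderiv : deriv (fun t : ℝ => f ‖x + t • v‖) =ᶠ[𝓝 0]
      fun t => f' ‖x + t • v‖ * (⟪x + t • v, v⟫ / ‖x + t • v‖) := by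
    filter_upwards [hnear] with t ⟨h0, hft⟩
    exact (hft.comp t (hasDerivAt_norm_add_smul h0)).deriv
  have hnorm : HasDerivAt (fun s : ℝ => ‖x + s • v‖) (⟪x, v⟫ / ‖x‖) 0 := by
    simpa using hasDerivAt_norm_add_smul (t := 0) (v := v) (by simpa using hx)
  have hinner : HasDerivAt (fun t : ℝ => ⟪x + t • v, v⟫) ⟪v, v⟫ 0 := by
    simpa using (hasDerivAt_add_smul x v 0).inner ℝ (hasDerivAt_const (0 : ℝ) v)
  have hsecond := (hf'.comp_of_eq (0 : ℝ) hnorm (by simp)).fun_mul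
    (hinner.fun_div hnorm (by simpa using hx))
  rw [iteratedDeriv_succ, iteratedDeriv_one, hderiv.deriv_eq]
  refine hsecond.deriv.trans ?_
  simp only [Function.comp_apply, zero_smul, add_zero, real_inner_self_eq_norm_sq]
  field_simp

theorem OrthonormalBasis.sum_iteratedDeriv_two_comp_norm_add_smul {ι : Type*} [Fintype ι]
    (b : OrthonormalBasis ι ℝ E) {f f' : ℝ → ℝ} {f'' : ℝ} {x : E} (hx : x ≠ 0)
    (hf : ∀ᶠ s in 𝓝 ‖x‖, HasDerivAt f (f' s) s) (hf' : HasDerivAt f' f'' ‖x‖) :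
    ∑ i, iteratedDeriv 2 (fun t : ℝ => f ‖x + t • b i‖) 0 =
      f'' + (Fintype.card ι - 1) * f' ‖x‖ / ‖x‖ := by
  have hparseval : ∑ i, ⟪x, b i⟫ ^ 2 = ‖x‖ ^ 2 := by
    simpa [sq, real_inner_comm, real_inner_self_eq_norm_sq] using b.sum_inner_mul_inner x x
  have hx' : ‖x‖ ≠ 0 := norm_ne_zero_iff.2 hx
  simp only [iteratedDeriv_two_comp_norm_add_smul _ hx hf hf', b.orthonormal.1, one_pow]
  calc ∑ i, (f'' * (⟪x, b i⟫ / ‖x‖) ^ 2 + f' ‖x‖ * (1 - (⟪x, b i⟫ / ‖x‖) ^ 2) / ‖x‖)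
      = ∑ i, ((f'' - f' ‖x‖ / ‖x‖) / ‖x‖ ^ 2 * ⟪x, b i⟫ ^ 2 + f' ‖x‖ / ‖x‖) := by
        congr! 1 with i; field_simp; ring
    _ = f'' + (Fintype.card ι - 1) * f' ‖x‖ / ‖x‖ := by
        rw [Finset.sum_add_distrib, ← Finset.mul_sum, hparseval, Finset.sum_const,
          Finset.card_univ, nsmul_eq_mul]
        field_simp
        ring

end Radial

theorem lap_comp_norm {f f' : ℝ → ℝ} {f'' : ℝ} {x : E4} (hx : x ≠ 0)
    (hf : ∀ᶠ s in 𝓝 ‖x‖, HasDerivAt f (f' s) s) (hf' : HasDerivAt f' f'' ‖x‖) :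
    lap (fun y => f ‖y‖) x = f'' + 3 * f' ‖x‖ / ‖x‖ := by
  have hsum :=
    (EuclideanSpace.basisFun (Fin 4) ℝ).sum_iteratedDeriv_two_comp_norm_add_smul hx hf hf'
  simp only [EuclideanSpace.basisFun_apply, Fintype.card_fin] at hsum
  rw [lap, hsum]
  norm_num

def coshMoment (n : ℕ) (r : ℝ) : ℝ := ∫ t in Ioi 0, exp (-r * cosh t) * cosh t ^ n

theorem exp_neg_mul_cosh_mul_cosh_pow_le (n : ℕ) {r t : ℝ} (hr : 0 < r) (ht : 0 ≤ t) :
    exp (-r * cosh t) * cosh t ^ n ≤ (n ! : ℝ) * (2 / r) ^ n * exp (-(r / 2) * t) := by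
  -- `uⁿ / n! ≤ eᵘ` at `u = (r / 2) cosh t` absorbs the power, and `t ≤ cosh t`.
  have hpow : cosh t ^ n ≤ (n ! : ℝ) * (2 / r) ^ n * exp (r / 2 * cosh t) := by
    have hexp := pow_div_factorial_le_exp (x := r / 2 * cosh t) (by positivity) n
    rw [div_le_iff₀ (by positivity), mul_pow] at hexp
    calc cosh t ^ n = (2 / r) ^ n * ((r / 2) ^ n * cosh t ^ n) := by
          rw [← mul_assoc, ← mul_pow]; field_simp; simp
      _ ≤ (2 / r) ^ n * (exp (r / 2 * cosh t) * n !) := by gcongr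
      _ = _ := by ring
  have ht_le : t ≤ cosh t := (self_le_sinh_iff.2 ht).trans (sinh_lt_cosh t).le
  calc exp (-r * cosh t) * cosh t ^ n
      ≤ exp (-r * cosh t) * (n ! * (2 / r) ^ n * exp (r / 2 * cosh t)) := by gcongr
    _ = n ! * (2 / r) ^ n * exp (-(r / 2) * cosh t) := by
        rw [mul_left_comm, ← exp_add]; ring_nf
    _ ≤ (n ! : ℝ) * (2 / r) ^ n * exp (-(r / 2) * t) := by
        gcongr _ * exp ?_
        nlinarith

theorem integrableOn_exp_neg_mul_cosh_mul_cosh_pow (n : ℕ) {r : ℝ} (hr : 0 < r) :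
    IntegrableOn (fun t => exp (-r * cosh t) * cosh t ^ n) (Ioi 0) := by
  refine ((exp_neg_integrableOn_Ioi 0 (half_pos hr)).const_mul (n ! * (2 / r) ^ n)).mono'
    (by fun_prop) ?_
  filter_upwards [ae_restrict_mem measurableSet_Ioi] with t ht
  rw [norm_of_nonneg (by positivity)]
  exact exp_neg_mul_cosh_mul_cosh_pow_le n hr ht.le

theorem tendsto_exp_neg_mul_cosh_mul_cosh_pow_atTop (n : ℕ) {r : ℝ} (hr : 0 < r) :
    Tendsto (fun t => exp (-r * cosh t) * cosh t ^ n) atTop (𝓝 0) := by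
  have hdecay : Tendsto (fun t => (n ! : ℝ) * (2 / r) ^ n * exp (-(r / 2) * t)) atTop (𝓝 0) := by
    simpa [neg_mul] using (tendsto_exp_neg_atTop_nhds_zero.comp
      (tendsto_id.const_mul_atTop (half_pos hr))).const_mul ((n ! : ℝ) * (2 / r) ^ n)
  refine squeeze_zero' (.of_forall fun t => by positivity) ?_ hdecay
  filter_upwards [eventually_ge_atTop 0] with t ht
  exact exp_neg_mul_cosh_mul_cosh_pow_le n hr ht

theorem hasDerivAt_coshMoment (n : ℕ) {r : ℝ} (hr : 0 < r) :
    HasDerivAt (coshMoment n) (-coshMoment (n + 1) r) r := by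
  have hdominated := hasDerivAt_integral_of_dominated_loc_of_deriv_le
    (μ := volume.restrict (Ioi 0)) (x₀ := r)
    (F := fun s t => exp (-s * cosh t) * cosh t ^ n)
    (F' := fun s t => -(exp (-s * cosh t) * cosh t ^ (n + 1)))
    (bound := fun t => exp (-(r / 2) * cosh t) * cosh t ^ (n + 1))
    (Metric.ball_mem_nhds r (half_pos hr)) (.of_forall fun s => by fun_prop)
    (integrableOn_exp_neg_mul_cosh_mul_cosh_pow n hr) (by fun_prop) ?_
    (integrableOn_exp_neg_mul_cosh_mul_cosh_pow (n + 1) (half_pos hr)) ?_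
  · have h := hdominated.2
    rw [integral_neg] at h
    exact h
  · refine .of_forall fun t s hs => ?_
    have hs : r / 2 ≤ s := by
      rw [Metric.mem_ball, dist_eq, abs_lt] at hs; linarith
    rw [norm_neg, norm_of_nonneg (by positivity)]
    gcongr ?_ * _
    exact exp_le_exp.2 (by nlinarith [cosh_pos t])
  · refine .of_forall fun t s _ => ?_
    refine (((hasDerivAt_neg s).mul_const (cosh t)).exp.mul_const (cosh t ^ n)).congr_deriv ?_
    ring

theorem tendsto_exp_neg_mul_cosh_mul_sinh_mul_atTop {r : ℝ} (hr : 0 < r) :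
    Tendsto (fun t => exp (-r * cosh t) * sinh t * (r * cosh t + 1)) atTop (𝓝 0) := by
  have hmajorant : Tendsto (fun t => r * (exp (-r * cosh t) * cosh t ^ 2)
      + exp (-r * cosh t) * cosh t ^ 1) atTop (𝓝 0) := by
    simpa using ((tendsto_exp_neg_mul_cosh_mul_cosh_pow_atTop 2 hr).const_mul r).add
      (tendsto_exp_neg_mul_cosh_mul_cosh_pow_atTop 1 hr)
  refine squeeze_zero' ?_ (.of_forall fun t => ?_) hmajorant
  · filter_upwards [eventually_ge_atTop 0] with t ht
    have := sinh_nonneg_iff.2 ht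
    positivity
  · have hsinh : sinh t ≤ cosh t := (sinh_lt_cosh t).le
    calc exp (-r * cosh t) * sinh t * (r * cosh t + 1)
        ≤ exp (-r * cosh t) * cosh t * (r * cosh t + 1) := by gcongr
      _ = _ := by ring

theorem coshMoment_bessel_equation {r : ℝ} (hr : 0 < r) :
    r ^ 2 * coshMoment 3 r - r * coshMoment 2 r - (r ^ 2 + 1) * coshMoment 1 r = 0 := by
  have hint (n : ℕ) : IntegrableOn (fun t => exp (-r * cosh t) * cosh t ^ n) (Ioi 0) :=
    integrableOn_exp_neg_mul_cosh_mul_cosh_pow n hr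
  set G : ℝ → ℝ := fun t => exp (-r * cosh t) * sinh t * (r * cosh t + 1)
  have hG (t : ℝ) : HasDerivAt G (-(r ^ 2 * (exp (-r * cosh t) * cosh t ^ 3)
      - r * (exp (-r * cosh t) * cosh t ^ 2)
      - (r ^ 2 + 1) * (exp (-r * cosh t) * cosh t ^ 1))) t := by
    refine ((((hasDerivAt_cosh t).const_mul (-r)).exp.fun_mul (hasDerivAt_sinh t)).fun_mul
      (((hasDerivAt_cosh t).const_mul r).add_const 1)).congr_deriv ?_
    linear_combination (exp (-r * cosh t) * r ^ 2 * cosh t) * cosh_sq t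
  have h3 := (hint 3).const_mul (r ^ 2)
  have h2 := (hint 2).const_mul r
  have h1 := (hint 1).const_mul (r ^ 2 + 1)
  have hftc := integral_Ioi_of_hasDerivAt_of_tendsto (hG 0).continuousAt.continuousWithinAt
    (fun t _ => hG t) ((h3.sub' h2).sub' h1).neg
    (tendsto_exp_neg_mul_cosh_mul_sinh_mul_atTop hr)
  rw [integral_neg, integral_sub (h3.sub' h2) h1, integral_sub h3 h2, integral_const_mul,
    integral_const_mul, integral_const_mul] at hftc
  simp only [G, sinh_zero, mul_zero, zero_mul, sub_self] at hftc
  simp only [coshMoment]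
  linear_combination -hftc

theorem besselK1_eq_coshMoment_one : besselK1 = coshMoment 1 := by
  ext r
  simp [besselK1, coshMoment]

def WfunDeriv (r : ℝ) : ℝ := -2 / r ^ 3 + coshMoment 2 r / r + coshMoment 1 r / r ^ 2

theorem hasDerivAt_Wfun {r : ℝ} (hr : 0 < r) : HasDerivAt Wfun (WfunDeriv r) r := by
  have h := ((hasDerivAt_const r 1).fun_div (hasDerivAt_pow 2 r) (by positivity)).fun_sub
    ((hasDerivAt_coshMoment 1 hr).fun_div (hasDerivAt_id' r) hr.ne')
  rw [show Wfun = fun s => 1 / s ^ 2 - coshMoment 1 s / s by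
    rw [← besselK1_eq_coshMoment_one]; rfl]
  refine h.congr_deriv ?_
  rw [WfunDeriv]
  field_simp
  ring

theorem hasDerivAt_WfunDeriv {r : ℝ} (hr : 0 < r) :
    HasDerivAt WfunDeriv
      (6 / r ^ 4 - coshMoment 3 r / r - 2 * coshMoment 2 r / r ^ 2 - 2 * coshMoment 1 r / r ^ 3)
      r := by
  refine ((((hasDerivAt_const r (-2)).fun_div (hasDerivAt_pow 3 r) (by positivity)).fun_add
    ((hasDerivAt_coshMoment 2 hr).fun_div (hasDerivAt_id' r) hr.ne')).fun_add
    ((hasDerivAt_coshMoment 1 hr).fun_div (hasDerivAt_pow 2 r) (by positivity))).congr_deriv ?_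
  field_simp
  ring

theorem radial_W_equation (x : E4) (hx : x ≠ 0) :
    - lap (fun y => Wfun ‖y‖) x + Wfun ‖x‖ = 1 / ‖x‖^2 := by
  have hr : 0 < ‖x‖ := norm_pos_iff.2 hx
  rw [lap_comp_norm hx ((eventually_gt_nhds hr).mono fun s hs => hasDerivAt_Wfun hs)
    (hasDerivAt_WfunDeriv hr), Wfun, WfunDeriv, besselK1_eq_coshMoment_one]
  linear_combination (norm := skip) coshMoment_bessel_equation hr / ‖x‖ ^ 3
  field_simp
  ring
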